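/- Let (Z, μ) be a measure space, n ≥ 1, q ≥ 1, let f_1, …, f_n : Z → ℝ be measurable with each product f_i·f_j μ-integrable, let g_1, …, g_n ∈ ℝ^q, e_1, …, e_n ∈ ℝ, and let Δ be a symmetric invertible q×q real matrix. Define the projected functions P f_i(z) = f_i(z) − g_iᵀ Δ⁻¹ (n⁻¹ ∑_{s=1}^n g_s f_s(z)) and the projected residuals e_i^{pro} = e_i − g_iᵀ Δ⁻¹ (n⁻¹ ∑_{s=1}^n g_s e_s). Then ∑_{i=1}^n ∑_{j=1}^n e_i e_j ∫_Z P f_i(z) · P f_j(z) dμ(z) = ∑_{i=1}^n ∑_{j=1}^n e_i^{pro} e_j^{pro} ∫_Z f_i(z) f_j(z) dμ(z). -/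

import Mathlib

/-!
Writing `G` for the `n × q` matrix with rows `g_i`, both projections are multiplication by the
same matrix `P = 1 - n⁻¹ G Δ⁻¹ Gᵀ`: `(𝒫f_i(z))_i = P (f_i(z))_i` and `e^{pro} = P e`.
With `K` the Gram matrix `K_st = ∫ f_s f_t dμ`, the left side is `eᵀ (P K Pᵀ) e` and the right
side is `(P e)ᵀ K (P e)`; they agree because `P` is symmetric along with `Δ`.
-/

open MeasureTheory Matrix

section Gram

variable {Z κ : Type*} [MeasurableSpace Z]

noncomputable def gramMatrix (μ : Measure Z) (f : κ → Z → ℝ) : Matrix κ κ ℝ :=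
  of fun s t => ∫ z, f s z * f t z ∂μ

theorem gramMatrix_apply (μ : Measure Z) (f : κ → Z → ℝ) (s t : κ) :
    gramMatrix μ f s t = ∫ z, f s z * f t z ∂μ :=
  rfl

theorem integral_mulVec_mul_mulVec {ι : Type*} [Fintype κ] {μ : Measure Z} {f : κ → Z → ℝ}
    (hf : ∀ s t, Integrable (fun z => f s z * f t z) μ) (A : Matrix ι κ ℝ) (i j : ι) :
    ∫ z, (A *ᵥ fun s => f s z) i * (A *ᵥ fun s => f s z) j ∂μ
      = (A * gramMatrix μ f * Aᵀ) i j := calc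
  _ = ∫ z, ∑ s, ∑ t, A i s * A j t * (f s z * f t z) ∂μ := by
    congr with z
    simp only [mulVec, dotProduct, Finset.sum_mul_sum]
    exact Finset.sum_congr rfl fun s _ => Finset.sum_congr rfl fun t _ => by ring
  _ = ∑ s, ∑ t, A i s * A j t * gramMatrix μ f s t := by
    rw [integral_finsetSum _ fun s _ => integrable_finsetSum _ fun t _ => (hf s t).const_mul _]
    refine Finset.sum_congr rfl fun s _ => ?_
    rw [integral_finsetSum _ fun t _ => (hf s t).const_mul _]
    exact Finset.sum_congr rfl fun t _ => integral_const_mul _ _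
  _ = (A * gramMatrix μ f * Aᵀ) i j := by
    simp only [Matrix.mul_apply, transpose_apply, Finset.sum_mul]
    rw [Finset.sum_comm]
    exact Finset.sum_congr rfl fun s _ => Finset.sum_congr rfl fun t _ => by ring

end Gram

theorem sum_sum_mul_mul_eq_dotProduct_mulVec {ι : Type*} [Fintype ι] (e : ι → ℝ)
    (B : Matrix ι ι ℝ) : ∑ i, ∑ j, e i * e j * B i j = e ⬝ᵥ B *ᵥ e := by
  simp only [dotProduct, mulVec, Finset.mul_sum]
  exact Finset.sum_congr rfl fun i _ => Finset.sum_congr rfl fun j _ => by ring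

theorem dotProduct_mul_mul_transpose_mulVec {ι κ : Type*} [Fintype ι] [Fintype κ]
    (e : ι → ℝ) (A : Matrix ι κ ℝ) (K : Matrix κ κ ℝ) :
    e ⬝ᵥ (A * K * Aᵀ) *ᵥ e = (Aᵀ *ᵥ e) ⬝ᵥ K *ᵥ (Aᵀ *ᵥ e) := by
  rw [← mulVec_mulVec, ← mulVec_mulVec, dotProduct_mulVec, mulVec_transpose,
    dotProduct_mulVec]

section Projection

variable {ι κ : Type*} [Fintype ι] [Fintype κ] [DecidableEq ι] [DecidableEq κ]

noncomputable def residualMatrix (g : ι → κ → ℝ) (Δ : Matrix κ κ ℝ) (c : ℝ) : Matrix ι ι ℝ :=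
  1 - c • (of g * Δ⁻¹ * (of g)ᵀ)

theorem sub_dotProduct_inv_mulVec_eq_residualMatrix_mulVec (g : ι → κ → ℝ)
    (Δ : Matrix κ κ ℝ) (c : ℝ) (v : ι → ℝ) (i : ι) :
    v i - g i ⬝ᵥ Δ⁻¹ *ᵥ (fun k => c * ∑ s, g s k * v s) = (residualMatrix g Δ c *ᵥ v) i := by
  have hsum : (fun k => c * ∑ s, g s k * v s) = c • ((of g)ᵀ *ᵥ v) := by
    ext k
    simp [mulVec, dotProduct]
  rw [residualMatrix, sub_mulVec, one_mulVec, Pi.sub_apply, hsum, smul_mulVec, mulVec_smul,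
    dotProduct_smul, ← mulVec_mulVec, ← mulVec_mulVec]
  rfl

omit [Fintype ι] in
theorem residualMatrix_transpose {Δ : Matrix κ κ ℝ} (hΔ : Δ.IsSymm) (g : ι → κ → ℝ) (c : ℝ) :
    (residualMatrix g Δ c)ᵀ = residualMatrix g Δ c := by
  rw [residualMatrix, transpose_sub, transpose_one, transpose_smul, transpose_mul,
    transpose_mul, transpose_transpose, hΔ.inv.eq, Matrix.mul_assoc]

end Projection

theorem double_projection_closed_form_general
    {Z : Type*} [MeasurableSpace Z] (μ : Measure Z)
    (n q : ℕ)
    (f : Fin n → Z → ℝ)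
    (hfint : ∀ i j, Integrable (fun z => f i z * f j z) μ)
    (g : Fin n → Fin q → ℝ) (e : Fin n → ℝ)
    (Δ : Matrix (Fin q) (Fin q) ℝ) (hΔsymm : Δ.IsSymm)
    (Pf : Fin n → Z → ℝ)
    (hPf : ∀ i z, Pf i z
      = f i z - g i ⬝ᵥ Δ⁻¹.mulVec (fun k => (n : ℝ)⁻¹ * ∑ s, g s k * f s z))
    (epro : Fin n → ℝ)
    (hepro : ∀ i, epro i
      = e i - g i ⬝ᵥ Δ⁻¹.mulVec (fun k => (n : ℝ)⁻¹ * ∑ s, g s k * e s)) :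
    ∑ i, ∑ j, e i * e j * ∫ z, Pf i z * Pf j z ∂μ
      = ∑ i, ∑ j, epro i * epro j * ∫ z, f i z * f j z ∂μ := by
  set P := residualMatrix g Δ (n : ℝ)⁻¹
  have hPf' : ∀ i z, Pf i z = (P *ᵥ fun s => f s z) i := fun i z => by
    rw [hPf, ← sub_dotProduct_inv_mulVec_eq_residualMatrix_mulVec]
  have hepro' : epro = P *ᵥ e := funext fun i => by
    rw [hepro, ← sub_dotProduct_inv_mulVec_eq_residualMatrix_mulVec]
  have hPsymm : Pᵀ = P := residualMatrix_transpose hΔsymm g _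
  simp_rw [hPf', integral_mulVec_mul_mulVec hfint, ← gramMatrix_apply μ f,
    sum_sum_mul_mul_eq_dotProduct_mulVec, dotProduct_mul_mul_transpose_mulVec, hPsymm, hepro']

/-- Algebraic core of the closed-form representation of the double-projected
Cramér–von Mises statistic: the double sum of `e_i e_j ∫ 𝒫f_i 𝒫f_j dμ` equals the
double sum of projected residuals `e_i^{pro} e_j^{pro} ∫ f_i f_j dμ`. -/
theorem double_projection_closed_form
    {Z : Type*} [MeasurableSpace Z] (μ : Measure Z)
    (n q : ℕ) (hn : 1 ≤ n) (hq : 1 ≤ q)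
    (f : Fin n → Z → ℝ) (hfmeas : ∀ i, Measurable (f i))
    (hfint : ∀ i j, Integrable (fun z => f i z * f j z) μ)
    (g : Fin n → Fin q → ℝ) (e : Fin n → ℝ)
    (Δ : Matrix (Fin q) (Fin q) ℝ) (hΔsymm : Δ.IsSymm) (hΔinv : IsUnit Δ.det)
    (Pf : Fin n → Z → ℝ)
    (hPf : ∀ i z, Pf i z
      = f i z - g i ⬝ᵥ Δ⁻¹.mulVec (fun k => (n : ℝ)⁻¹ * ∑ s, g s k * f s z))
    (epro : Fin n → ℝ)
    (hepro : ∀ i, epro i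
      = e i - g i ⬝ᵥ Δ⁻¹.mulVec (fun k => (n : ℝ)⁻¹ * ∑ s, g s k * e s)) :
    ∑ i, ∑ j, e i * e j * ∫ z, Pf i z * Pf j z ∂μ
      = ∑ i, ∑ j, epro i * epro j * ∫ z, f i z * f j z ∂μ :=
  double_projection_closed_form_general μ n q f hfint g e Δ hΔsymm Pf hPf epro hepro
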